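/- arXiv:1804.04315 — 2 statements merged into one kernel-verified Lean document; each statement's English description precedes it below -/
import Mathlib

section
/- Let u : ℝⁿ → ℝ be bounded with sup u = 0, and let β > 0. Define f_β(x) = u(x) − β√(1+|x|²). Then f_β attains its maximum at some point x_β ∈ ℝⁿ, and as β → 0: f_β(x_β) → 0, β√(1+|x_β|²) → 0, and u(x_β) → 0. -/
/-!
Write `⟨x⟩ = √(1 + ‖x‖²)`. Since `u ≤ 0` and `⟨x⟩ ≥ ‖x‖`, the function `f_β` tends to `-∞` at
infinity, so the extreme value theorem gives a maximizer. The maximum value `m(β) = f_β(x_β)` lies in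
`[u y - β ⟨y⟩, 0]` for every `y`, and `u y` comes arbitrarily close to `sup u = 0`, so `m(β) → 0`.
The penalty `β ⟨x_β⟩ = u(x_β) - m(β)` is squeezed between `0` and `-m(β)`, and
`u(x_β) = m(β) + β ⟨x_β⟩`.
-/

open Filter Topology Set

section JapaneseBracket

variable {E : Type*} [NormedAddCommGroup E]

lemma norm_le_sqrt_one_add_norm_sq (x : E) : ‖x‖ ≤ √(1 + ‖x‖ ^ 2) :=
  Real.le_sqrt_of_sq_le (by linarith)

lemma continuous_sqrt_one_add_norm_sq : Continuous fun x : E => √(1 + ‖x‖ ^ 2) := by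
  fun_prop

lemma tendsto_sqrt_one_add_norm_sq_cocompact [ProperSpace E] :
    Tendsto (fun x : E => √(1 + ‖x‖ ^ 2)) (cocompact E) atTop :=
  tendsto_atTop_mono norm_le_sqrt_one_add_norm_sq tendsto_norm_cocompact_atTop

end JapaneseBracket

theorem Continuous.exists_forall_sub_mul_le_sub_mul {X : Type*} [TopologicalSpace X] [Nonempty X]
    {u p : X → ℝ} (hu : Continuous u) (hp : Continuous p) {C : ℝ} (huC : ∀ x, u x ≤ C)
    (hp_lim : Tendsto p (cocompact X) atTop) {β : ℝ} (hβ : 0 < β) :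
    ∃ x, ∀ y, u y - β * p y ≤ u x - β * p x := by
  have hlim : Tendsto (fun x => u x - β * p x) (cocompact X) atBot := by
    simp_rw [sub_eq_add_neg]
    exact tendsto_atBot_add_left_of_ge _ C huC
      (tendsto_neg_atTop_atBot.comp (hp_lim.const_mul_atTop hβ))
  exact (hu.sub (continuous_const.mul hp)).exists_forall_ge hlim

section PenalizedMaximizers

variable {α : Type*} {u p : α → ℝ} {xb : ℝ → α}

theorem tendsto_penalized_max (hp : ∀ x, 0 ≤ p x) (hsup : IsLUB (range u) 0)
    (hxb : ∀ β ∈ Ioi (0 : ℝ), ∀ y, u y - β * p y ≤ u (xb β) - β * p (xb β)) :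
    Tendsto (fun β => u (xb β) - β * p (xb β)) (𝓝[>] 0) (𝓝 0) := by
  refine tendsto_order.2 ⟨fun a ha => ?_, fun a ha => ?_⟩
  · obtain ⟨_, ⟨y, rfl⟩, hay, -⟩ := hsup.exists_between ha
    have hy : Tendsto (fun β : ℝ => u y - β * p y) (𝓝[>] 0) (𝓝 (u y)) :=
      ((continuous_const.sub (continuous_id.mul continuous_const)).tendsto' 0 (u y)
        (by simp)).mono_left nhdsWithin_le_nhds
    filter_upwards [hy.eventually (lt_mem_nhds hay), self_mem_nhdsWithin] with β hβy hβ
    exact hβy.trans_le (hxb β hβ y)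
  · filter_upwards [self_mem_nhdsWithin] with β (hβ : 0 < β)
    have hu : u (xb β) ≤ 0 := hsup.1 ⟨xb β, rfl⟩
    nlinarith [hp (xb β)]

theorem tendsto_penalty_at_maximizer (hp : ∀ x, 0 ≤ p x) (hsup : IsLUB (range u) 0)
    (hxb : ∀ β ∈ Ioi (0 : ℝ), ∀ y, u y - β * p y ≤ u (xb β) - β * p (xb β)) :
    Tendsto (fun β => β * p (xb β)) (𝓝[>] 0) (𝓝 0) := by
  refine tendsto_of_tendsto_of_tendsto_of_le_of_le' tendsto_const_nhds
    (by simpa using (tendsto_penalized_max hp hsup hxb).neg) ?_ ?_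
  · filter_upwards [self_mem_nhdsWithin] with β (hβ : 0 < β)
    exact mul_nonneg hβ.le (hp _)
  · filter_upwards with β
    have hu : u (xb β) ≤ 0 := hsup.1 ⟨xb β, rfl⟩
    linarith

end PenalizedMaximizers

theorem penalized_maximizers_general
    (n : ℕ) (u : (Fin n → ℝ) → ℝ)
    (hcont : Continuous u)
    (hsup : IsLUB (Set.range u) 0) :
    (∀ β > (0:ℝ), ∃ x : Fin n → ℝ, ∀ y,
        u y - β * Real.sqrt (1 + ‖y‖ ^ 2) ≤ u x - β * Real.sqrt (1 + ‖x‖ ^ 2)) ∧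
    (∀ xb : ℝ → (Fin n → ℝ),
      (∀ β ∈ Set.Ioi (0:ℝ), ∀ y,
          u y - β * Real.sqrt (1 + ‖y‖ ^ 2) ≤ u (xb β) - β * Real.sqrt (1 + ‖xb β‖ ^ 2)) →
      Filter.Tendsto (fun β => u (xb β) - β * Real.sqrt (1 + ‖xb β‖ ^ 2))
        (nhdsWithin 0 (Set.Ioi 0)) (nhds 0) ∧
      Filter.Tendsto (fun β => β * Real.sqrt (1 + ‖xb β‖ ^ 2))
        (nhdsWithin 0 (Set.Ioi 0)) (nhds 0) ∧
      Filter.Tendsto (fun β => u (xb β)) (nhdsWithin 0 (Set.Ioi 0)) (nhds 0)) := by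
  have hp : ∀ x : Fin n → ℝ, 0 ≤ √(1 + ‖x‖ ^ 2) := fun _ => Real.sqrt_nonneg _
  refine ⟨fun β hβ => hcont.exists_forall_sub_mul_le_sub_mul continuous_sqrt_one_add_norm_sq
    (fun x => hsup.1 ⟨x, rfl⟩) tendsto_sqrt_one_add_norm_sq_cocompact hβ, fun xb hxb => ?_⟩
  have hmax := tendsto_penalized_max hp hsup hxb
  have hpen := tendsto_penalty_at_maximizer hp hsup hxb
  exact ⟨hmax, hpen, by simpa using hmax.add hpen⟩

theorem penalized_maximizers
    (n : ℕ) (u : (Fin n → ℝ) → ℝ)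
    (hcont : Continuous u) (hbdd : ∃ M, ∀ x, |u x| ≤ M)
    (hsup : IsLUB (Set.range u) 0) :
    (∀ β > (0:ℝ), ∃ x : Fin n → ℝ, ∀ y,
        u y - β * Real.sqrt (1 + ‖y‖ ^ 2) ≤ u x - β * Real.sqrt (1 + ‖x‖ ^ 2)) ∧
    (∀ xb : ℝ → (Fin n → ℝ),
      (∀ β ∈ Set.Ioi (0:ℝ), ∀ y,
          u y - β * Real.sqrt (1 + ‖y‖ ^ 2) ≤ u (xb β) - β * Real.sqrt (1 + ‖xb β‖ ^ 2)) →
      Filter.Tendsto (fun β => u (xb β) - β * Real.sqrt (1 + ‖xb β‖ ^ 2))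
        (nhdsWithin 0 (Set.Ioi 0)) (nhds 0) ∧
      Filter.Tendsto (fun β => β * Real.sqrt (1 + ‖xb β‖ ^ 2))
        (nhdsWithin 0 (Set.Ioi 0)) (nhds 0) ∧
      Filter.Tendsto (fun β => u (xb β)) (nhdsWithin 0 (Set.Ioi 0)) (nhds 0)) :=
  penalized_maximizers_general n u hcont hsup
end

section
/- Let u : ℝⁿ × [0,T] → ℝ be bounded and uniformly continuous, and for C(t) = (L+1)t + K suppose σ := sup_{x,y∈ℝⁿ, t∈[0,T]} (u(x,t) − u(y,t) − C(t)|x−y|) > 0. For α, β > 0 define Φ(x,y,t,s) = u(x,t) − u(y,s) − C(t)|x−y| − |t−s|²/α² − β(|x|²+|y|²). Then Φ attains a maximum at some (x̄,ȳ,t̄,s̄) with Φ(x̄,ȳ,t̄,s̄) > σ/2 for all sufficiently small β (uniformly in α), |t̄−s̄| = O(α), β(|x̄|²+|ȳ|²) bounded, and for α small enough x̄ ≠ ȳ and t̄, s̄ > 0. -/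
/-- The doubled-variables penalized functional used in the spatial Lipschitz estimate. -/
noncomputable def Phi {n : ℕ} (u : (Fin n → ℝ) → ℝ → ℝ) (L K α β : ℝ)
    (x y : Fin n → ℝ) (t s : ℝ) : ℝ :=
  u x t - u y s - ((L + 1) * t + K) * ‖x - y‖ - |t - s| ^ 2 / α ^ 2
    - β * (‖x‖ ^ 2 + ‖y‖ ^ 2)

/-!
Pick (x₀, y₀, t₀) with u(x₀,t₀) − u(y₀,t₀) − C(t₀)|x₀ − y₀| > 3σ/4; for β small,
Φ(x₀,y₀,t₀,t₀) > σ/2, so the maximum of Φ exceeds σ/2. Since |u| ≤ M and C ≥ K ≥ 0,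
Φ ≤ 2M − |t − s|²/α² − β(|x|² + |y|²): this makes Φ coercive, so its maximum is attained, and at
the maximum it gives |t̄ − s̄|² ≤ 2Mα² and β(|x̄|² + |ȳ|²) ≤ 2M. For small α, |t̄ − s̄| is then
within the modulus of uniform continuity of u in time at level σ/4. If x̄ = ȳ, t̄ = 0 or s̄ = 0,
then Φ(x̄,ȳ,t̄,s̄) is at most that oscillation of u in time (at t̄ = 0 or s̄ = 0 the Lipschitz bound
of u(·,0) absorbs the spatial difference), contradicting Φ(x̄,ȳ,t̄,s̄) > σ/2.
-/

open Set

theorem IsCompact.exists_isMaxOn_of_forall_notMem_le {X α : Type*} [TopologicalSpace X]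
    [LinearOrder α] [TopologicalSpace α] [ClosedIciTopology α] {f : X → α} {s k : Set X}
    (hk : IsCompact k) (hf : ContinuousOn f k) {x₀ : X} (hx₀ : x₀ ∈ k)
    (hoff : ∀ x ∈ s, x ∉ k → f x ≤ f x₀) : ∃ x ∈ k, IsMaxOn f s x := by
  obtain ⟨x, hxk, hmax⟩ := hk.exists_isMaxOn ⟨x₀, hx₀⟩ hf
  refine ⟨x, hxk, fun y hy => ?_⟩
  by_cases hyk : y ∈ k
  · exact hmax hyk
  · exact (hoff y hy hyk).trans (hmax hx₀)

theorem UniformContinuousOn.exists_forall_abs_sub_lt {E : Type*} [PseudoMetricSpace E]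
    {u : E → ℝ → ℝ} {S : Set ℝ} (huc : UniformContinuousOn (fun p : E × ℝ => u p.1 p.2) (univ ×ˢ S))
    {ε : ℝ} (hε : 0 < ε) :
    ∃ δ > 0, ∀ x, ∀ t ∈ S, ∀ s ∈ S, |t - s| < δ → |u x t - u x s| < ε := by
  obtain ⟨δ, hδ, hu⟩ := Metric.uniformContinuousOn_iff.mp huc ε hε
  refine ⟨δ, hδ, fun x t ht s hs hts => ?_⟩
  have := hu (x, t) ⟨mem_univ x, ht⟩ (x, s) ⟨mem_univ x, hs⟩ (by simpa [Prod.dist_eq, Real.dist_eq])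
  simpa [Real.dist_eq] using this

theorem le_mul_of_sq_div_sq_le {d c α : ℝ} (hc : 0 ≤ c) (hα : 0 < α)
    (h : d ^ 2 / α ^ 2 ≤ c) : d ≤ (c + 1) * α := by
  rw [div_le_iff₀ (by positivity)] at h
  refine le_of_pow_le_pow_left₀ two_ne_zero (by positivity) ?_
  nlinarith [mul_nonneg (by positivity : 0 ≤ c ^ 2 + c + 1) (sq_nonneg α)]

section Phi

variable {n : ℕ}

theorem Phi_le {L t : ℝ} (u : (Fin n → ℝ) → ℝ → ℝ) (K α β : ℝ) (x y : Fin n → ℝ) (s : ℝ)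
    (hL : 0 ≤ L + 1) (ht : 0 ≤ t) :
    Phi u L K α β x y t s ≤
      u x t - u y s - K * ‖x - y‖ - |t - s| ^ 2 / α ^ 2 - β * (‖x‖ ^ 2 + ‖y‖ ^ 2) := by
  have : K * ‖x - y‖ ≤ ((L + 1) * t + K) * ‖x - y‖ := by
    gcongr
    nlinarith
  unfold Phi
  linarith

theorem Phi_le_two_mul_sub {u : (Fin n → ℝ) → ℝ → ℝ} {L K M t : ℝ} (α β : ℝ) (x y : Fin n → ℝ)
    (s : ℝ) (hM : ∀ x t, |u x t| ≤ M) (hL : 0 ≤ L + 1) (hK : 0 ≤ K) (ht : 0 ≤ t) :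
    Phi u L K α β x y t s ≤ 2 * M - |t - s| ^ 2 / α ^ 2 - β * (‖x‖ ^ 2 + ‖y‖ ^ 2) := by
  have hux := (abs_le.mp (hM x t)).2
  have huy := (abs_le.mp (hM y s)).1
  have : 0 ≤ K * ‖x - y‖ := by positivity
  linarith [Phi_le u K α β x y s hL ht]

theorem Phi_exists_max {u : (Fin n → ℝ) → ℝ → ℝ} {L K α β T M : ℝ} (hT : 0 ≤ T)
    (hM : ∀ x t, |u x t| ≤ M)
    (hu : ContinuousOn (fun p : (Fin n → ℝ) × ℝ => u p.1 p.2) (univ ×ˢ Icc 0 T))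
    (hL : 0 ≤ L + 1) (hK : 0 ≤ K) (hβ : 0 < β) :
    ∃ xb yb : Fin n → ℝ, ∃ tb sb : ℝ, tb ∈ Icc 0 T ∧ sb ∈ Icc 0 T ∧
      ∀ x y : Fin n → ℝ, ∀ t ∈ Icc 0 T, ∀ s ∈ Icc 0 T,
        Phi u L K α β x y t s ≤ Phi u L K α β xb yb tb sb := by
  set R := √(2 * M / β)
  have hR0 : 0 ≤ R := Real.sqrt_nonneg _
  set k := Metric.closedBall (0 : Fin n → ℝ) R ×ˢ Metric.closedBall (0 : Fin n → ℝ) R ×ˢ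
    Icc 0 T ×ˢ Icc 0 T
  have hcont : ContinuousOn (fun p : (Fin n → ℝ) × (Fin n → ℝ) × ℝ × ℝ =>
      Phi u L K α β p.1 p.2.1 p.2.2.1 p.2.2.2) k := by
    unfold Phi
    refine .sub (.sub (.sub (.sub ?_ ?_) ?_) ?_) ?_
    · exact hu.comp (f := fun p : (Fin n → ℝ) × (Fin n → ℝ) × ℝ × ℝ => (p.1, p.2.2.1))
        (by fun_prop) fun p hp => ⟨mem_univ _, hp.2.2.1⟩
    · exact hu.comp (f := fun p : (Fin n → ℝ) × (Fin n → ℝ) × ℝ × ℝ => (p.2.1, p.2.2.2))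
        (by fun_prop) fun p hp => ⟨mem_univ _, hp.2.2.2⟩
    all_goals fun_prop
  have hR : 2 * M ≤ β * R ^ 2 := by
    have hM0 : 0 ≤ M := (abs_nonneg _).trans (hM 0 0)
    rw [Real.sq_sqrt (by positivity), mul_div_cancel₀ _ hβ.ne']
  have h0 : ((0 : Fin n → ℝ), (0 : Fin n → ℝ), (0 : ℝ), (0 : ℝ)) ∈ k :=
    ⟨by simpa using hR0, by simpa using hR0, ⟨le_rfl, hT⟩, ⟨le_rfl, hT⟩⟩
  -- Off `k` the quadratic penalty exceeds `2M`, so there `Φ ≤ 0 = Φ(0,0,0,0)`.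
  have hoff : ∀ p ∈ univ ×ˢ univ ×ˢ Icc 0 T ×ˢ Icc 0 T, p ∉ k →
      Phi u L K α β p.1 p.2.1 p.2.2.1 p.2.2.2 ≤ Phi u L K α β 0 0 0 0 := by
    rintro ⟨x, y, t, s⟩ ⟨-, -, ht, hs⟩ hout
    dsimp only at ht hs ⊢
    have hfar : R ^ 2 ≤ ‖x‖ ^ 2 + ‖y‖ ^ 2 := by
      simp only [k, mem_prod, mem_closedBall_zero_iff, ht, hs, and_true, not_and_or, not_le] at hout
      rcases hout with hx | hy
      · nlinarith [sq_nonneg ‖y‖]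
      · nlinarith [sq_nonneg ‖x‖]
    have : 0 ≤ |t - s| ^ 2 / α ^ 2 := by positivity
    have hzero : Phi u L K α β 0 0 0 0 = 0 := by simp [Phi]
    nlinarith [Phi_le_two_mul_sub α β x y s hM hL hK ht.1]
  obtain ⟨⟨xb, yb, tb, sb⟩, hbk, hmax⟩ := IsCompact.exists_isMaxOn_of_forall_notMem_le
    ((isCompact_closedBall _ _).prod ((isCompact_closedBall _ _).prod
      (isCompact_Icc.prod isCompact_Icc))) hcont h0 hoff
  exact ⟨xb, yb, tb, sb, hbk.2.2.1, hbk.2.2.2, fun x y t ht s hs =>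
    isMaxOn_iff.mp hmax (x, y, t, s) ⟨mem_univ x, mem_univ y, ht, hs⟩⟩

theorem ne_and_pos_of_Phi_gt {u : (Fin n → ℝ) → ℝ → ℝ} {L K α β t s ε : ℝ}
    {x y : Fin n → ℝ} (hL : 0 ≤ L + 1) (hK : 0 ≤ K) (hβ : 0 ≤ β)
    (hLip : LipschitzWith (Real.toNNReal K) fun x => u x 0) (ht : 0 ≤ t) (hs : 0 ≤ s)
    (hosc : ∀ z, |u z t - u z s| ≤ ε) (hΦ : ε < Phi u L K α β x y t s) :
    x ≠ y ∧ 0 < t ∧ 0 < s := by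
  have hΦle : ε < u x t - u y s - K * ‖x - y‖ := by
    have : 0 ≤ |t - s| ^ 2 / α ^ 2 := by positivity
    have : 0 ≤ β * (‖x‖ ^ 2 + ‖y‖ ^ 2) := by positivity
    linarith [Phi_le u K α β x y s hL ht]
  have hlip : u x 0 - u y 0 ≤ K * ‖x - y‖ := by
    have := hLip.dist_le_mul x y
    rw [Real.dist_eq, dist_eq_norm, Real.coe_toNNReal K hK] at this
    exact (le_abs_self _).trans this
  refine ⟨?_, ht.lt_of_ne ?_, hs.lt_of_ne ?_⟩
  · rintro rfl
    linarith [le_of_abs_le (hosc x)]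
  · rintro rfl
    linarith [le_of_abs_le (hosc y)]
  · rintro rfl
    linarith [le_of_abs_le (hosc x)]

end Phi

theorem doubling_variables_lemma
    (n : ℕ) (T L K : ℝ) (hT : 0 < T) (hL : 0 < L) (hK : 0 < K)
    (u : (Fin n → ℝ) → ℝ → ℝ)
    (hbdd : ∃ M, ∀ x t, |u x t| ≤ M)
    (huc : UniformContinuousOn (fun p : (Fin n → ℝ) × ℝ => u p.1 p.2)
      (Set.univ ×ˢ Set.Icc 0 T))
    (hLip0 : LipschitzWith (Real.toNNReal K) fun x => u x 0)
    (σ : ℝ)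
    (hσdef : σ = sSup {v | ∃ x y : Fin n → ℝ, ∃ t ∈ Set.Icc 0 T,
        v = u x t - u y t - ((L + 1) * t + K) * ‖x - y‖})
    (hσpos : 0 < σ) :
    ∃ β₀ > (0:ℝ), ∃ M > (0:ℝ), ∀ β, 0 < β → β < β₀ →
      ∃ α₀ > (0:ℝ), ∀ α, 0 < α → α < α₀ →
        ∃ xb yb : Fin n → ℝ, ∃ tb sb : ℝ,
          tb ∈ Set.Icc 0 T ∧ sb ∈ Set.Icc 0 T ∧
          (∀ x y : Fin n → ℝ, ∀ t ∈ Set.Icc 0 T, ∀ s ∈ Set.Icc 0 T,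
            Phi u L K α β x y t s ≤ Phi u L K α β xb yb tb sb) ∧
          σ / 2 < Phi u L K α β xb yb tb sb ∧
          |tb - sb| ≤ M * α ∧
          β * (‖xb‖ ^ 2 + ‖yb‖ ^ 2) ≤ M ∧
          xb ≠ yb ∧ 0 < tb ∧ 0 < sb := by
  obtain ⟨M₀, hM₀⟩ := hbdd
  have hM₀_nonneg : 0 ≤ M₀ := (abs_nonneg _).trans (hM₀ 0 0)
  have hL' : 0 ≤ L + 1 := by linarith
  have hσ : 3 * σ / 4 < σ := by linarith
  nth_rw 2 [hσdef] at hσ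
  obtain ⟨-, ⟨x₀, y₀, t₀, ht₀, rfl⟩, hv⟩ :=
    exists_lt_of_lt_csSup (by exact ⟨_, 0, 0, 0, ⟨le_rfl, hT.le⟩, rfl⟩) hσ
  obtain ⟨δ, hδ, hosc⟩ := huc.exists_forall_abs_sub_lt (show 0 < σ / 4 by positivity)
  refine ⟨σ / (4 * (‖x₀‖ ^ 2 + ‖y₀‖ ^ 2 + 1)), by positivity, 2 * M₀ + 1, by positivity,
    fun β hβ hβ₀ => ⟨δ / (2 * M₀ + 1), by positivity, fun α hα hα₀ => ?_⟩⟩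
  obtain ⟨xb, yb, tb, sb, htb, hsb, hmax⟩ :=
    Phi_exists_max (α := α) hT.le hM₀ huc.continuousOn hL' hK.le hβ
  have hΦ : σ / 2 < Phi u L K α β xb yb tb sb := by
    refine lt_of_lt_of_le ?_ (hmax x₀ y₀ t₀ ht₀ t₀ ht₀)
    rw [lt_div_iff₀ (by positivity)] at hβ₀
    simp only [Phi, sub_self, abs_zero, ne_eq, OfNat.ofNat_ne_zero, not_false_eq_true, zero_pow,
      zero_div, sub_zero]
    linarith
  have hpen := Phi_le_two_mul_sub α β xb yb sb hM₀ hL' hK.le htb.1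
  have hP : 0 ≤ |tb - sb| ^ 2 / α ^ 2 := by positivity
  have hQ : 0 ≤ β * (‖xb‖ ^ 2 + ‖yb‖ ^ 2) := by positivity
  have hts : |tb - sb| ≤ (2 * M₀ + 1) * α :=
    le_mul_of_sq_div_sq_le (by positivity) hα (by linarith)
  have hosc' : ∀ z, |u z tb - u z sb| ≤ σ / 4 := fun z =>
    (hosc z tb htb sb hsb (hts.trans_lt ((lt_div_iff₀' (by positivity)).1 hα₀))).le
  obtain ⟨hne, htb_pos, hsb_pos⟩ :=
    ne_and_pos_of_Phi_gt hL' hK.le hβ.le hLip0 htb.1 hsb.1 hosc' (lt_trans (by linarith) hΦ)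
  exact ⟨xb, yb, tb, sb, htb, hsb, hmax, hΦ, hts, by linarith, hne, htb_pos, hsb_pos⟩
end
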